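/- arXiv:1004.1116 — 4 statements merged into one kernel-verified Lean document; each statement's English description precedes it below -/
import Mathlib

section
/- Let q be a prime power, k = algebraic closure of F_q, and α ∈ F_{q²} \ F_q. For any unipotent g ∈ GL_n(k), the matrix α - α^q·g is invertible, and the map s(g) = (g - 1)(α - α^q g)⁻¹ sends unipotent matrices to nilpotent matrices; its inverse is s⁻¹(x) = (1 + α^q x)⁻¹(αx + 1), which sends nilpotent matrices to unipotent matrices. -/
/-!
For distinct scalars `a ≠ b` of a field `k` and any `k`-algebra, `s(g) = (g - 1)(a - b g)⁻¹`
and `t(x) = (1 + b x)⁻¹(a x + 1)` are mutually inverse Möbius transformations; here `a = α`,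
`b = α ^ q`. All factors are rational functions of one element, hence commute, and with
`δ = a - b` one has `1 + b s(g) = δ (a - b g)⁻¹` and `a s(g) + 1 = δ g (a - b g)⁻¹`, while
`a - b t(x) = δ (1 + b x)⁻¹` and `t(x) - 1 = δ (1 + b x)⁻¹ x`. Nilpotency is transported
because `s(g)` and `t(x) - 1` are `g - 1`, resp. `x`, times a commuting factor.
-/

theorem Commute.ringInverse_right {M₀ : Type*} [MonoidWithZero M₀] {a u : M₀}
    (h : Commute a u) : Commute a (Ring.inverse u) := by
  by_cases hu : IsUnit u
  · obtain ⟨v, rfl⟩ := hu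
    rw [Ring.inverse_unit]
    exact h.units_inv_right
  · rw [Ring.inverse_non_unit u hu]
    exact Commute.zero_right a

section Cayley

variable {k A : Type*} [Field k] [Ring A] [Algebra k A]

noncomputable def cayleyMap (a b : k) (g : A) : A :=
  (g - 1) * Ring.inverse (a • 1 - b • g)

noncomputable def cayleyMapInv (a b : k) (x : A) : A :=
  Ring.inverse (1 + b • x) * (a • x + 1)

variable {a b : k}

theorem commute_smul_one_sub_smul (g : A) : Commute g (a • 1 - b • g) :=
  ((Commute.one_right g).smul_right a).sub_right ((Commute.refl g).smul_right b)

theorem commute_one_add_smul (x : A) : Commute x (1 + b • x) :=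
  (Commute.one_right x).add_right ((Commute.refl x).smul_right b)

theorem isUnit_smul_one_sub_smul (hab : a ≠ b) {g : A} (hg : IsNilpotent (g - 1)) :
    IsUnit (a • (1 : A) - b • g) := by
  have hδ : IsUnit (algebraMap k A (a - b)) := (sub_ne_zero.mpr hab).isUnit.map _
  have heq : a • (1 : A) - b • g = algebraMap k A (a - b) + (-b) • (g - 1) := by
    rw [Algebra.algebraMap_eq_smul_one, sub_smul, neg_smul, smul_sub]
    abel
  rw [heq]
  exact (hg.smul (-b)).isUnit_add_left_of_commute hδ (Algebra.commutes _ _).symm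

theorem cayleyMap_pow_eq_zero {g : A} {n : ℕ} (hg : (g - 1) ^ n = 0) :
    cayleyMap a b g ^ n = 0 := by
  have hcomm : Commute (g - 1) (a • 1 - b • g) :=
    (commute_smul_one_sub_smul g).sub_left (Commute.one_left _)
  rw [cayleyMap, hcomm.ringInverse_right.mul_pow, hg, zero_mul]

theorem cayleyMapInv_cayleyMap (hab : a ≠ b) {g : A} (hu : IsUnit (a • (1 : A) - b • g)) :
    cayleyMapInv a b (cayleyMap a b g) = g := by
  set u := a • (1 : A) - b • g
  set w := Ring.inverse u
  have hgw : Commute g w := (commute_smul_one_sub_smul g).ringInverse_right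
  have hden : 1 + b • ((g - 1) * w) = (a - b) • w := by
    calc 1 + b • ((g - 1) * w) = (u + b • (g - 1)) * w := by
          rw [add_mul, Ring.mul_inverse_cancel u hu, smul_mul_assoc]
      _ = (a - b) • w := by
          have : u + b • (g - 1) = (a - b) • (1 : A) := by
            simp only [u, sub_smul, smul_sub]
            abel
          rw [this, smul_mul_assoc, one_mul]
  have hnum : a • ((g - 1) * w) + 1 = g * ((a - b) • w) := by
    calc a • ((g - 1) * w) + 1 = (a • (g - 1) + u) * w := by
          rw [add_mul, Ring.mul_inverse_cancel u hu, smul_mul_assoc]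
      _ = g * ((a - b) • w) := by
          have : a • (g - 1) + u = (a - b) • g := by
            simp only [u, sub_smul, smul_sub]
            abel
          rw [this, smul_mul_assoc, mul_smul_comm]
  have hδw : IsUnit ((a - b) • w) := hu.ringInverse.smul (Units.mk0 _ (sub_ne_zero.mpr hab))
  rw [cayleyMapInv, cayleyMap, hden, hnum, (hgw.smul_right (a - b)).eq,
    Ring.inverse_mul_cancel_left _ _ hδw]

theorem cayleyMapInv_sub_one {x : A} (hv : IsUnit (1 + b • x)) :
    cayleyMapInv a b x - 1 = (a - b) • (Ring.inverse (1 + b • x) * x) := by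
  set w := Ring.inverse (1 + b • x)
  have hwv : w * (1 + b • x) = 1 := Ring.inverse_mul_cancel _ hv
  calc w * (a • x + 1) - 1 = w * (a • x + 1 - (1 + b • x)) := by rw [mul_sub, hwv]
    _ = (a - b) • (w * x) := by
        rw [← mul_smul_comm, sub_smul]
        congr 1
        abel

theorem cayleyMapInv_sub_one_pow_eq_zero {x : A} {n : ℕ} (hx : x ^ n = 0) :
    (cayleyMapInv a b x - 1) ^ n = 0 := by
  rw [cayleyMapInv_sub_one ((IsNilpotent.smul ⟨n, hx⟩ b).isUnit_one_add), smul_pow,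
    (commute_one_add_smul x).ringInverse_right.symm.mul_pow, hx, mul_zero, smul_zero]

theorem cayleyMap_cayleyMapInv (hab : a ≠ b) {x : A} (hv : IsUnit (1 + b • x)) :
    cayleyMap a b (cayleyMapInv a b x) = x := by
  set w := Ring.inverse (1 + b • x)
  have hwv : w * (1 + b • x) = 1 := Ring.inverse_mul_cancel _ hv
  have hden : a • (1 : A) - b • cayleyMapInv a b x = (a - b) • w := by
    calc a • (1 : A) - b • (w * (a • x + 1))
          = w * (a • (1 + b • x) - b • (a • x + 1)) := by
          rw [mul_sub, mul_smul_comm, hwv, mul_smul_comm]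
      _ = w * ((a - b) • 1) := by
          congr 1
          simp only [smul_add, smul_smul, sub_smul, mul_comm a b]
          abel
      _ = (a - b) • w := by rw [mul_smul_comm, mul_one]
  have hδw : IsUnit ((a - b) • w) := hv.ringInverse.smul (Units.mk0 _ (sub_ne_zero.mpr hab))
  rw [cayleyMap, cayleyMapInv_sub_one hv, hden,
    (commute_one_add_smul x).ringInverse_right.eq.symm, ← mul_smul_comm,
    Ring.mul_inverse_cancel_right _ _ hδw]

end Cayley

theorem stmt8_general (k : Type*) [Field k] (q : ℕ) (α : k) (hα : α ^ q ≠ α) (n : ℕ) :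
    (∀ g : Matrix (Fin n) (Fin n) k, (g - 1) ^ n = 0 →
      IsUnit (α • (1 : Matrix (Fin n) (Fin n) k) - α ^ q • g) ∧
      ((g - 1) * Ring.inverse (α • (1 : Matrix (Fin n) (Fin n) k) - α ^ q • g)) ^ n = 0 ∧
      Ring.inverse (1 + α ^ q •
          ((g - 1) * Ring.inverse (α • (1 : Matrix (Fin n) (Fin n) k) - α ^ q • g))) *
        (α • ((g - 1) * Ring.inverse (α • (1 : Matrix (Fin n) (Fin n) k) - α ^ q • g)) + 1)
        = g) ∧
    (∀ x : Matrix (Fin n) (Fin n) k, x ^ n = 0 →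
      IsUnit (1 + α ^ q • x) ∧
      ((Ring.inverse (1 + α ^ q • x) * (α • x + 1)) - 1) ^ n = 0 ∧
      ((Ring.inverse (1 + α ^ q • x) * (α • x + 1)) - 1) *
        Ring.inverse (α • (1 : Matrix (Fin n) (Fin n) k)
          - α ^ q • (Ring.inverse (1 + α ^ q • x) * (α • x + 1))) = x) := by
  refine ⟨fun g hg => ?_, fun x hx => ?_⟩
  · have hu := isUnit_smul_one_sub_smul hα.symm ⟨n, hg⟩
    exact ⟨hu, cayleyMap_pow_eq_zero hg, cayleyMapInv_cayleyMap hα.symm hu⟩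
  · have hv : IsUnit (1 + α ^ q • x) := (IsNilpotent.smul ⟨n, hx⟩ _).isUnit_one_add
    exact ⟨hv, cayleyMapInv_sub_one_pow_eq_zero hx, cayleyMap_cayleyMapInv hα.symm hv⟩

/-- for q a prime power, k an algebraic closure of F_q and α ∈ F_{q²} \ F_q,
the map s(g) = (g-1)(α - α^q g)⁻¹ sends unipotent matrices to nilpotent ones, α - α^q g
being invertible, with inverse x ↦ (1 + α^q x)⁻¹(αx + 1) sending nilpotents to unipotents. -/
theorem stmt8 (p : ℕ) [Fact p.Prime] (m : ℕ) (hm : 0 < m)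
    (k : Type*) [Field k] [IsAlgClosed k] [CharP k p]
    (q : ℕ) (hq : q = p ^ m)
    (α : k) (hα2 : α ^ q ^ 2 = α) (hα : α ^ q ≠ α) (n : ℕ) :
    (∀ g : Matrix (Fin n) (Fin n) k, (g - 1) ^ n = 0 →
      IsUnit (α • (1 : Matrix (Fin n) (Fin n) k) - α ^ q • g) ∧
      ((g - 1) * Ring.inverse (α • (1 : Matrix (Fin n) (Fin n) k) - α ^ q • g)) ^ n = 0 ∧
      Ring.inverse (1 + α ^ q •
          ((g - 1) * Ring.inverse (α • (1 : Matrix (Fin n) (Fin n) k) - α ^ q • g))) *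
        (α • ((g - 1) * Ring.inverse (α • (1 : Matrix (Fin n) (Fin n) k) - α ^ q • g)) + 1)
        = g) ∧
    (∀ x : Matrix (Fin n) (Fin n) k, x ^ n = 0 →
      IsUnit (1 + α ^ q • x) ∧
      ((Ring.inverse (1 + α ^ q • x) * (α • x + 1)) - 1) ^ n = 0 ∧
      ((Ring.inverse (1 + α ^ q • x) * (α • x + 1)) - 1) *
        Ring.inverse (α • (1 : Matrix (Fin n) (Fin n) k)
          - α ^ q • (Ring.inverse (1 + α ^ q • x) * (α • x + 1))) = x) :=
  stmt8_general k q α hα n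
end

section
/- Let q be a prime power with q odd, k an algebraic closure of F_q, and F(g) = J_n·F_q(g⁻¹)ᵀ·J_n the unitary Frobenius on GL_n(k). If x ∈ Mat_n(k) is nilpotent with F'(x) = x (where F'(y) = J_n F_q(y)ᵀ J_n), and α ∈ F_{q²}\F_q, then u = (1 + α^q x)⁻¹(αx + 1) is a unipotent element fixed by F, i.e. u lies in the finite unitary group GU_n(F_q). -/
open Matrix

/-!
The map `σ M = J (M^{(q)})ᵀ J` is a ring anti-endomorphism of `Mat_n(k)` because `J² = 1`,
and `F g = σ (g⁻¹)`, `F' = σ`. Since `σ` fixes `x` and, by `α ^ q ^ 2 = α`, exchanges `α`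
and `α ^ q`, it exchanges the commuting units `1 + α x` and `1 + α^q x`; hence
`F u = σ (1 + α^q x) σ ((1 + α x)⁻¹) = (1 + α x)(1 + α^q x)⁻¹ = u`.
Unipotence holds because `u - 1 = (1 + α^q x)⁻¹ (α - α^q) x` is a product of commuting
factors, the second of which is nilpotent.
-/

theorem Commute.ringInverse_left {M₀ : Type*} [MonoidWithZero M₀] {a b : M₀}
    (h : Commute a b) : Commute (Ring.inverse a) b := by
  by_cases ha : IsUnit a
  · obtain ⟨u, rfl⟩ := ha
    rw [Ring.inverse_unit]
    exact h.units_inv_left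
  · rw [Ring.inverse_non_unit a ha]
    exact Commute.zero_left b

theorem cayley_sub_one_pow_eq_zero {R A : Type*} [CommRing R] [Ring A] [Algebra R A]
    {x : A} {n : ℕ} (hx : x ^ n = 0) (a b : R) :
    (Ring.inverse (1 + b • x) * (a • x + 1) - 1) ^ n = 0 := by
  have hv : IsUnit (1 + b • x) := (IsNilpotent.smul ⟨n, hx⟩ b).isUnit_one_add
  have hsub : Ring.inverse (1 + b • x) * (a • x + 1) - 1
      = Ring.inverse (1 + b • x) * ((a - b) • x) :=
    calc _ = Ring.inverse (1 + b • x) * (a • x + 1)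
            - Ring.inverse (1 + b • x) * (1 + b • x) := by
          rw [Ring.inverse_mul_cancel _ hv]
      _ = Ring.inverse (1 + b • x) * ((a - b) • x) := by
          rw [← mul_sub, sub_smul]
          congr 1
          abel
  have hcomm : Commute (Ring.inverse (1 + b • x)) ((a - b) • x) :=
    (((Commute.one_left x).add_left ((Commute.refl x).smul_left b)).ringInverse_left).smul_right _
  rw [hsub, hcomm.mul_pow, smul_pow, hx, smul_zero, mul_zero]

namespace Matrix

variable {R : Type*} [CommRing R]

theorem antidiagonal_mul_self {n : ℕ} {J : Matrix (Fin n) (Fin n) R}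
    (hJ : ∀ i j : Fin n, J i j = if (i : ℕ) + 1 + ((j : ℕ) + 1) = n + 1 then 1 else 0) :
    J * J = 1 := by
  have hrev : J = Fin.revPerm.permMatrix R := by
    ext i j
    rw [hJ, Equiv.Perm.permMatrix, PEquiv.toMatrix_apply]
    simp only [Equiv.toPEquiv_apply, Option.mem_def, Option.some.injEq, Fin.revPerm_apply,
      Fin.ext_iff, Fin.val_rev]
    split_ifs <;> first | rfl | omega
  have hinv : Fin.revPerm * Fin.revPerm = (1 : Equiv.Perm (Fin n)) := by
    ext i
    simp
  rw [hrev, ← permMatrix_mul, hinv, permMatrix_one]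

variable {n : Type*} [Fintype n] [DecidableEq n]

def twistedTranspose (φ : R →+* R) (J M : Matrix n n R) : Matrix n n R :=
  J * (M.map φ)ᵀ * J

variable (φ : R →+* R) {J : Matrix n n R}

theorem twistedTranspose_mul (hJ : J * J = 1) (M N : Matrix n n R) :
    twistedTranspose φ J (M * N) = twistedTranspose φ J N * twistedTranspose φ J M := by
  simp only [twistedTranspose, Matrix.map_mul, transpose_mul, mul_assoc]
  rw [← mul_assoc J J, hJ, one_mul]

theorem twistedTranspose_one (hJ : J * J = 1) : twistedTranspose φ J 1 = 1 := by
  simp [twistedTranspose, hJ]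

theorem twistedTranspose_add (M N : Matrix n n R) :
    twistedTranspose φ J (M + N) = twistedTranspose φ J M + twistedTranspose φ J N := by
  simp [twistedTranspose, Matrix.map_add, mul_add, add_mul]

theorem twistedTranspose_smul (c : R) (M : Matrix n n R) :
    twistedTranspose φ J (c • M) = φ c • twistedTranspose φ J M := by
  rw [twistedTranspose, Matrix.map_smul' φ c M (map_mul φ)]
  simp [twistedTranspose]

theorem twistedTranspose_ringInverse (hJ : J * J = 1) {M : Matrix n n R} (hM : IsUnit M) :
    twistedTranspose φ J (Ring.inverse M) = Ring.inverse (twistedTranspose φ J M) := by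
  have hleft : twistedTranspose φ J M * twistedTranspose φ J (Ring.inverse M) = 1 := by
    rw [← twistedTranspose_mul φ hJ, Ring.inverse_mul_cancel M hM, twistedTranspose_one φ hJ]
  have hright : twistedTranspose φ J (Ring.inverse M) * twistedTranspose φ J M = 1 := by
    rw [← twistedTranspose_mul φ hJ, Ring.mul_inverse_cancel M hM, twistedTranspose_one φ hJ]
  exact (Ring.inverse_unit ⟨_, _, hleft, hright⟩).symm

theorem twistedTranspose_one_add_smul (hJ : J * J = 1) {x : Matrix n n R}
    (hx : twistedTranspose φ J x = x) (c : R) :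
    twistedTranspose φ J (1 + c • x) = 1 + φ c • x := by
  rw [twistedTranspose_add, twistedTranspose_one φ hJ, twistedTranspose_smul, hx]

theorem twistedTranspose_ringInverse_cayley (hJ : J * J = 1) {x : Matrix n n R}
    (hx : IsNilpotent x) (hxσ : twistedTranspose φ J x = x) {a b : R}
    (hab : φ a = b) (hba : φ b = a) :
    twistedTranspose φ J (Ring.inverse (Ring.inverse (1 + b • x) * (a • x + 1)))
      = Ring.inverse (1 + b • x) * (a • x + 1) := by
  rw [add_comm (a • x) 1]
  have hv : IsUnit (1 + b • x) := (hx.smul b).isUnit_one_add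
  have hw : IsUnit (1 + a • x) := (hx.smul a).isUnit_one_add
  have hvw : Commute (1 + b • x) (1 + a • x) :=
    (Commute.one_left _).add_left
      ((Commute.one_right _).add_right (((Commute.refl x).smul_left b).smul_right a))
  calc twistedTranspose φ J (Ring.inverse (Ring.inverse (1 + b • x) * (1 + a • x)))
      = twistedTranspose φ J (Ring.inverse (1 + a • x) * (1 + b • x)) := by
        rw [Ring.inverse_mul (Or.inl hv.ringInverse), Ring.inverse_inverse hv]
    _ = (1 + a • x) * Ring.inverse (1 + b • x) := by
        rw [twistedTranspose_mul φ hJ, twistedTranspose_ringInverse φ hJ hw,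
          twistedTranspose_one_add_smul φ hJ hxσ, twistedTranspose_one_add_smul φ hJ hxσ,
          hab, hba]
    _ = Ring.inverse (1 + b • x) * (1 + a • x) := hvw.ringInverse_left.eq.symm

end Matrix

theorem stmt11_general (p : ℕ) [Fact p.Prime] (m : ℕ)
    (k : Type*) [Field k] [CharP k p]
    (q : ℕ) (hq : q = p ^ m)
    (α : k) (hα2 : α ^ q ^ 2 = α) (n : ℕ)
    (J : Matrix (Fin n) (Fin n) k)
    (hJ : ∀ i j : Fin n, J i j = if (i : ℕ) + 1 + ((j : ℕ) + 1) = n + 1 then 1 else 0)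
    (F : Matrix (Fin n) (Fin n) k → Matrix (Fin n) (Fin n) k)
    (hF : ∀ g, F g = J * ((Ring.inverse g).map (fun a => a ^ q))ᵀ * J)
    (F' : Matrix (Fin n) (Fin n) k → Matrix (Fin n) (Fin n) k)
    (hF' : ∀ y, F' y = J * (y.map (fun a => a ^ q))ᵀ * J)
    (x : Matrix (Fin n) (Fin n) k) (hx : x ^ n = 0) (hxF : F' x = x)
    (u : Matrix (Fin n) (Fin n) k)
    (hu : u = Ring.inverse (1 + α ^ q • x) * (α • x + 1)) :
    (u - 1) ^ n = 0 ∧ F u = u := by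
  set φ := iterateFrobenius k p m
  have hφ : ⇑φ = fun a => a ^ q := by
    funext a
    rw [iterateFrobenius_def, hq]
  have hσF : ∀ g, F g = twistedTranspose φ J (Ring.inverse g) := by
    intro g
    rw [hF, twistedTranspose, hφ]
  have hxσ : twistedTranspose φ J x = x := by
    rw [twistedTranspose, hφ, ← hF', hxF]
  have hφα : φ (α ^ q) = α := by
    rw [congrFun hφ, ← pow_mul, ← sq, hα2]
  subst hu
  refine ⟨cayley_sub_one_pow_eq_zero hx α (α ^ q), ?_⟩
  rw [hσF]
  exact twistedTranspose_ringInverse_cayley φ (antidiagonal_mul_self hJ) ⟨n, hx⟩ hxσ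
    (congrFun hφ α) hφα

/-- for q an odd prime power, if x is nilpotent and fixed by the unitary
Frobenius F' on the Lie algebra, then u = (1 + α^q x)⁻¹(αx + 1) is unipotent and fixed
by the unitary Frobenius F on the group, i.e. u ∈ GUₙ(F_q). -/
theorem stmt11 (p : ℕ) [Fact p.Prime] (m : ℕ) (hm : 0 < m)
    (k : Type*) [Field k] [IsAlgClosed k] [CharP k p]
    (q : ℕ) (hq : q = p ^ m) (hqodd : Odd q)
    (α : k) (hα2 : α ^ q ^ 2 = α) (hα : α ^ q ≠ α) (n : ℕ)
    (J : Matrix (Fin n) (Fin n) k)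
    (hJ : ∀ i j : Fin n, J i j = if (i : ℕ) + 1 + ((j : ℕ) + 1) = n + 1 then 1 else 0)
    (F : Matrix (Fin n) (Fin n) k → Matrix (Fin n) (Fin n) k)
    (hF : ∀ g, F g = J * ((Ring.inverse g).map (fun a => a ^ q))ᵀ * J)
    (F' : Matrix (Fin n) (Fin n) k → Matrix (Fin n) (Fin n) k)
    (hF' : ∀ y, F' y = J * (y.map (fun a => a ^ q))ᵀ * J)
    (x : Matrix (Fin n) (Fin n) k) (hx : x ^ n = 0) (hxF : F' x = x)
    (u : Matrix (Fin n) (Fin n) k)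
    (hu : u = Ring.inverse (1 + α ^ q • x) * (α • x + 1)) :
    (u - 1) ^ n = 0 ∧ F u = u :=
  stmt11_general p m k q hq α hα2 n J hJ F hF F' hF' x hx hxF u hu
end

section
/- Let μ be a partition of n with at least one odd part and at least one even part, and let i be minimal with μ_i - μ_{i+1} odd (where μ_{r+1} = 0 if needed). Then every integer m with -μ_{i+1} ≤ m ≤ μ_{i+1} occurs in the multiset Y = ⋃_j {μ_j - 1, μ_j - 3, …, 1 - μ_j}. -/
/-! Let `a = μ_i` and `b = μ_{i+1}`. Since `a - b` is odd, `a > b`, and for any `x` with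
`|x| ≤ b` exactly one of `a - 1 - x`, `b - 1 - x` is even. In the first case `x` lies in the
string `Y_i`, because `|x| ≤ b < a`; in the second it lies in `Y_{i+1}`, because
`x ≢ b (mod 2)` forces `|x| < b`. -/

/-- The multiset Y = ⋃_i {μ_i - 1, μ_i - 3, …, 1 - μ_i} attached to a partition μ. -/
def Ymul {n : ℕ} (μ : n.Partition) : Multiset ℤ :=
  μ.parts.bind fun m => (Multiset.range m).map fun j => (m : ℤ) - 1 - 2 * (j : ℤ)

theorem List.getD_mem_of_ne {α : Type*} {l : List α} {n : ℕ} {d : α} (h : l.getD n d ≠ d) :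
    l.getD n d ∈ l := by
  by_cases hn : n < l.length
  · rw [List.getD_eq_getElem _ _ hn]
    exact List.getElem_mem hn
  · exact absurd (List.getD_eq_default _ _ (not_lt.1 hn)) h

theorem mem_Ymul_of_mem_parts {n : ℕ} {μ : n.Partition} {m : ℕ} (hm : m ∈ μ.parts) {x : ℤ}
    (hx : |x| < m) (hpar : Even ((m : ℤ) - 1 - x)) : x ∈ Ymul μ := by
  obtain ⟨k, hk⟩ := hpar
  obtain ⟨hx₁, hx₂⟩ := abs_lt.1 hx
  lift k to ℕ using by omega
  -- The coercion `Multiset ℕ → Multiset ℤ` in `Ymul` elaborates to a monadic bind.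
  have hk_mem : (k : ℤ) ∈ ((Multiset.range m : Multiset ℕ) : Multiset ℤ) :=
    Multiset.mem_bind.2 ⟨k, Multiset.mem_range.2 (by omega), Multiset.mem_singleton.2 rfl⟩
  exact Multiset.mem_bind.2 ⟨m, hm, Multiset.mem_map.2 ⟨k, hk_mem, by omega⟩⟩

theorem Int.even_sub_one_sub_or_of_odd_sub {a b : ℕ} (hab : Odd (a - b)) {x : ℤ}
    (hx : |x| ≤ b) :
    (|x| < a ∧ Even ((a : ℤ) - 1 - x)) ∨ (|x| < b ∧ Even ((b : ℤ) - 1 - x)) := by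
  obtain ⟨c, hc⟩ := hab
  have ha : (a : ℤ) = b + 2 * c + 1 := by omega
  rcases Int.even_or_odd ((a : ℤ) - 1 - x) with ⟨k, hk⟩ | ⟨k, hk⟩
  · exact .inl ⟨by omega, k, hk⟩
  · refine .inr ⟨?_, k - c, by omega⟩
    rcases abs_le.1 hx with ⟨hx₁, hx₂⟩
    exact abs_lt.2 ⟨by omega, by omega⟩

theorem stmt13_general (n : ℕ) (μ : n.Partition)
    (part : ℕ → ℕ)
    (hpart : part = fun i => ((μ.parts.sort (· ≤ ·)).reverse).getD i 0)
    (i : ℕ) (hi : Odd (part i - part (i + 1))) :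
    ∀ x : ℤ, -(part (i + 1) : ℤ) ≤ x → x ≤ (part (i + 1) : ℤ) → x ∈ Ymul μ := by
  intro x hx₁ hx₂
  have hmem : ∀ j, |x| < part j → part j ∈ μ.parts := fun j hj => by
    have hpos : part j ≠ 0 := by have := (abs_nonneg x).trans_lt hj; omega
    subst hpart
    simpa using List.getD_mem_of_ne hpos
  rcases Int.even_sub_one_sub_or_of_odd_sub hi (abs_le.2 ⟨hx₁, hx₂⟩) with ⟨hlt, hev⟩ | ⟨hlt, hev⟩
  · exact mem_Ymul_of_mem_parts (hmem i hlt) hlt hev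
  · exact mem_Ymul_of_mem_parts (hmem (i + 1) hlt) hlt hev

/-- if μ has both odd and even parts and i is minimal with μ_i - μ_{i+1} odd
(parts sorted decreasingly, with μ_{r+1} = 0), then every integer m with
-μ_{i+1} ≤ m ≤ μ_{i+1} occurs in the multiset Y. -/
theorem stmt13 (n : ℕ) (μ : n.Partition)
    (ho : ∃ m ∈ μ.parts, Odd m) (he : ∃ m ∈ μ.parts, Even m)
    (part : ℕ → ℕ)
    (hpart : part = fun i => ((μ.parts.sort (· ≤ ·)).reverse).getD i 0)
    (i : ℕ) (hi : Odd (part i - part (i + 1)))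
    (hmin : ∀ j < i, Even (part j - part (j + 1))) :
    ∀ x : ℤ, -(part (i + 1) : ℤ) ≤ x → x ≤ (part (i + 1) : ℤ) → x ∈ Ymul μ :=
  stmt13_general n μ part hpart i hi
end

section
/- Let k be a field and μ a partition of n in which some part is odd occurring with odd multiplicity. Then there is no nilpotent n×n matrix x of Jordan type μ satisfying xᵀM + Mx = 0 for M = [[0, J_l],[-J_l, 0]] (n = 2l). Equivalently, the Jordan type of any element of sp_{2l}(k) has each odd part occurring with even multiplicity. -/
/-!
If `Xᵀ M + M X = 0` with `M` skew-symmetric and invertible, then `M X ^ e` is skew-symmetric for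
every even `e`, so `rank (X ^ e) = rank (M X ^ e)` is even: in characteristic `≠ 2` the radical of a
skew form has even codimension, because a nondegenerate skew Gram matrix `A` of size `r` satisfies
`det A = det Aᵀ = (-1) ^ r det A`. The multiplicity of the part `m` in the Jordan type of `X` is
`rank X ^ (m - 1) - 2 rank X ^ m + rank X ^ (m + 1)`, which is therefore even for odd `m`.
-/

open Matrix Module

namespace Matrix

theorem even_card_of_transpose_eq_neg {n R : Type*} [Fintype n] [DecidableEq n]
    [CommRing R] [IsDomain R] (h2 : (2 : R) ≠ 0) {A : Matrix n n R} (hA : Aᵀ = -A)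
    (hdet : A.det ≠ 0) : Even (Fintype.card n) := by
  have hsign : (-1 : R) ^ Fintype.card n * A.det = 1 * A.det := by
    rw [← det_neg, ← hA, det_transpose, one_mul]
  refine (neg_one_pow_eq_one_iff_even fun h => h2 ?_).mp (mul_right_cancel₀ hdet hsign)
  linear_combination -h

end Matrix

namespace LinearMap.BilinForm

theorem isRefl_of_skew {R M : Type*} [CommRing R] [AddCommGroup M] [Module R M]
    {B : LinearMap.BilinForm R M} (hskew : ∀ x y, B x y = -B y x) : B.IsRefl :=
  fun x y h => by rw [hskew, h, neg_zero]

variable {k V : Type*} [Field k] [AddCommGroup V] [Module k V] [FiniteDimensional k V]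

theorem even_finrank_of_nondegenerate (h2 : (2 : k) ≠ 0) {B : LinearMap.BilinForm k V}
    (hB : B.Nondegenerate) (hskew : ∀ x y, B x y = -B y x) : Even (finrank k V) := by
  let b := Module.finBasis k V
  have hA : (toMatrix b B)ᵀ = -(toMatrix b B) := by
    ext i j
    simp only [transpose_apply, toMatrix_apply, Matrix.neg_apply, hskew (b j)]
  simpa using Matrix.even_card_of_transpose_eq_neg h2 hA ((nondegenerate_iff_det_ne_zero b).mp hB)

theorem even_finrank_sub_finrank_ker (h2 : (2 : k) ≠ 0) {B : LinearMap.BilinForm k V}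
    (hskew : ∀ x y, B x y = -B y x) : Even (finrank k V - finrank k (LinearMap.ker B)) := by
  obtain ⟨W, hW⟩ := (LinearMap.ker B).exists_isCompl
  have hker : LinearMap.ker (B.restrict W) = ⊥ := by
    rw [ker_restrict_eq_of_codisjoint hW.symm.codisjoint, ← Submodule.disjoint_iff_comap_eq_bot]
    · exact hW.symm.disjoint
    · intro x _ y hy
      exact isRefl_of_skew hskew _ _ (LinearMap.congr_fun hy x)
  have hWskew : ∀ x y : W, B.restrict W x y = -B.restrict W y x := fun x y => hskew x y
  have hnd : (B.restrict W).Nondegenerate :=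
    (isRefl_of_skew hWskew).nondegenerate_iff_separatingLeft.mpr
      (LinearMap.separatingLeft_iff_ker_eq_bot.mpr hker)
  have hdim := Submodule.finrank_add_eq_of_isCompl hW
  rw [show finrank k V - finrank k (LinearMap.ker B) = finrank k W by omega]
  exact even_finrank_of_nondegenerate h2 hnd hWskew

end LinearMap.BilinForm

namespace Matrix

section

variable {n k : Type*} [Fintype n] [DecidableEq n] [Field k]

theorem even_rank_of_transpose_eq_neg (h2 : (2 : k) ≠ 0) {A : Matrix n n k} (hA : Aᵀ = -A) :
    Even A.rank := by
  have hker : LinearMap.ker (toBilin' A) = LinearMap.ker Aᵀ.mulVecLin := by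
    ext x
    simp only [LinearMap.mem_ker, mulVecLin_apply, mulVec_transpose, LinearMap.ext_iff,
      toBilin'_apply', dotProduct_mulVec, LinearMap.zero_apply, dotProduct_eq_zero_iff]
  have hskew : ∀ x y, toBilin' A x y = -toBilin' A y x := by
    intro x y
    rw [toBilin'_apply', toBilin'_apply', dotProduct_mulVec, ← mulVec_transpose, hA, neg_mulVec,
      neg_dotProduct, dotProduct_comm]
  have heven := LinearMap.BilinForm.even_finrank_sub_finrank_ker h2 hskew
  have hrk := LinearMap.finrank_range_add_finrank_ker Aᵀ.mulVecLin
  rw [hker] at heven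
  rw [← rank, rank_transpose] at hrk
  rwa [show finrank k (n → k) - finrank k (LinearMap.ker Aᵀ.mulVecLin) = A.rank by omega] at heven

theorem even_rank_pow_of_transpose_mul_add_mul_eq_zero (h2 : (2 : k) ≠ 0) {M X : Matrix n n k}
    (hM : Mᵀ = -M) (hMdet : IsUnit M.det) (hX : Xᵀ * M + M * X = 0) {e : ℕ} (he : Even e) :
    Even (X ^ e).rank := by
  have hconj : SemiconjBy M (-X) Xᵀ := by
    rw [SemiconjBy, mul_neg, neg_eq_iff_add_eq_zero, add_comm, hX]
  have hskew : (M * X ^ e)ᵀ = -(M * X ^ e) := by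
    rw [transpose_mul, transpose_pow, hM, mul_neg, ← (hconj.pow_right e).eq, he.neg_pow]
  rw [← rank_mul_eq_right_of_isUnit_det M _ hMdet]
  exact even_rank_of_transpose_eq_neg h2 hskew

end

section BlockAntidiagonal

variable {m R : Type*} [CommRing R] {J : Matrix m m R}

theorem transpose_fromBlocks_zero_neg (hJ : Jᵀ = J) :
    (fromBlocks 0 J (-J) 0)ᵀ = -fromBlocks 0 J (-J) 0 := by
  simp [fromBlocks_transpose, fromBlocks_neg, hJ]

theorem isUnit_det_fromBlocks_zero_neg [Fintype m] [DecidableEq m] (hJ : J * J = 1) :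
    IsUnit (fromBlocks 0 J (-J) 0).det :=
  isUnit_det_of_right_inverse (B := fromBlocks 0 (-J) J 0) <| by
    simp [fromBlocks_multiply, hJ, ← fromBlocks_one]

end BlockAntidiagonal

section AntiIdentity

variable (R : Type*) [CommRing R] {l : ℕ}

theorem permMatrix_revPerm_apply (i j : Fin l) :
    (Fin.revPerm : Equiv.Perm (Fin l)).permMatrix R i j =
      if (i : ℕ) + 1 + ((j : ℕ) + 1) = l + 1 then 1 else 0 := by
  simp only [Equiv.Perm.permMatrix, PEquiv.toMatrix_apply, Equiv.toPEquiv_apply,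
    Option.mem_some_iff, Fin.revPerm_apply, Fin.ext_iff, Fin.val_rev]
  congr 1
  apply propext
  omega

theorem transpose_permMatrix_revPerm :
    ((Fin.revPerm : Equiv.Perm (Fin l)).permMatrix R)ᵀ = Fin.revPerm.permMatrix R := by
  rw [transpose_permMatrix, Equiv.Perm.inv_def, Fin.revPerm_symm]

theorem permMatrix_revPerm_mul_self :
    (Fin.revPerm : Equiv.Perm (Fin l)).permMatrix R * Fin.revPerm.permMatrix R = 1 := by
  rw [← permMatrix_mul, show Fin.revPerm * Fin.revPerm = 1 from Equiv.ext Fin.rev_rev,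
    permMatrix_one]

end AntiIdentity

end Matrix

/-- if a partition μ of 2l has an odd part occurring with odd multiplicity,
then no nilpotent matrix of Jordan type μ lies in sp_{2l}(k) (M = [[0,J],[-J,0]]); here
the Jordan type is recorded by the multiplicities
count_μ(m) = rank x^{m-1} - 2 rank x^m + rank x^{m+1}. -/
theorem stmt19 (k : Type*) [Field k] (h2 : (2 : k) ≠ 0) (l : ℕ)
    (μ : (2 * l).Partition)
    (hbad : ∃ m, Odd m ∧ Odd (μ.parts.count m))
    (J : Matrix (Fin l) (Fin l) k)
    (hJ : ∀ i j : Fin l, J i j = if (i : ℕ) + 1 + ((j : ℕ) + 1) = l + 1 then 1 else 0)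
    (M : Matrix (Fin l ⊕ Fin l) (Fin l ⊕ Fin l) k)
    (hM : M = Matrix.fromBlocks 0 J (-J) 0) :
    ¬ ∃ X : Matrix (Fin l ⊕ Fin l) (Fin l ⊕ Fin l) k,
        X ^ (2 * l) = 0 ∧ Xᵀ * M + M * X = 0 ∧
        (∀ m : ℕ, 1 ≤ m → (μ.parts.count m : ℤ) =
          ((X ^ (m - 1)).rank : ℤ) + ((X ^ (m + 1)).rank : ℤ) - 2 * ((X ^ m).rank : ℤ)) := by
  rintro ⟨X, -, hX, hcount⟩
  obtain ⟨m, ⟨t, rfl⟩, hodd⟩ := hbad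
  have hJrev : J = Fin.revPerm.permMatrix k :=
    Matrix.ext fun i j => by rw [hJ, permMatrix_revPerm_apply]
  subst hM hJrev
  have hrank (e : ℕ) (he : Even e) : Even (X ^ e).rank :=
    even_rank_pow_of_transpose_mul_add_mul_eq_zero h2
      (transpose_fromBlocks_zero_neg (transpose_permMatrix_revPerm k))
      (isUnit_det_fromBlocks_zero_neg (permMatrix_revPerm_mul_self k)) hX he
  obtain ⟨a, ha⟩ := hrank (2 * t) (even_two_mul t)
  obtain ⟨b, hb⟩ := hrank (2 * t + 2) ⟨t + 1, by ring⟩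
  have hmult := hcount (2 * t + 1) (by omega)
  rw [Nat.add_sub_cancel, ha, hb] at hmult
  rw [Nat.odd_iff] at hodd
  omega
end
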